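/- Under Assumption 1 (u symmetric, continuous, nondecreasing, submodular, u(∅)=0, u(0,y_S)=u(y_S)), the generalized reservation value is weakly decreasing in the set of uncovered prizes: for any tuple x, any additional prize value x_j, cost c_k ≥ 0 and prize distribution F_k, x_k*(x) ≥ x_k*(x, x_j), where x_k*(x) = min{y ≥ 0 : u(x, y) ≥ -c_k + ∫ u(x, y, t) dF_k(t)}. -/

import Mathlib

open scoped NNReal

/-- `u` is symmetric: invariant under permutations of its arguments. -/
def IsSymmU (u : List ℝ≥0 → ℝ) : Prop := ∀ l l' : List ℝ≥0, l.Perm l' → u l = u l'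

/-- `u` is nondecreasing in each argument. -/
def IsMonoU (u : List ℝ≥0 → ℝ) : Prop :=
  ∀ l l' : List ℝ≥0, List.Forall₂ (· ≤ ·) l l' → u l ≤ u l'

/-- `u` is submodular: `u(x∧y)+u(x∨y) ≤ u(x)+u(y)` for equal-length tuples. -/
def IsSubmodU (u : List ℝ≥0 → ℝ) : Prop := ∀ l l' : List ℝ≥0, l.length = l'.length →
  u (List.zipWith min l l') + u (List.zipWith max l l') ≤ u l + u l'

/-- `u` is continuous on tuples of each fixed length. -/
def IsContU (u : List ℝ≥0 → ℝ) : Prop :=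
  ∀ n : ℕ, Continuous (fun v : Fin n → ℝ≥0 => u (List.ofFn v))

/-- Assumption 1: `u(∅)=0`, prepending a zero leaves `u` unchanged, `u` nonnegative,
continuous, symmetric, nondecreasing and submodular. -/
def Assumption1 (u : List ℝ≥0 → ℝ) : Prop :=
  u [] = 0 ∧ (∀ l, u (0 :: l) = u l) ∧ (∀ l, 0 ≤ u l) ∧
    IsContU u ∧ IsSymmU u ∧ IsMonoU u ∧ IsSubmodU u

/-- Assumption 2: the benefit of raising an argument from `0` to `xi` does not
depend on the values of other arguments exceeding `xi`. -/
def Assumption2 (u : List ℝ≥0 → ℝ) : Prop :=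
  ∀ (l : List ℝ≥0) (xi xlo xhi : ℝ≥0), xi ≤ xlo → xlo < xhi →
    u (l ++ [xhi, xi]) - u (l ++ [xhi, 0]) = u (l ++ [xlo, xi]) - u (l ++ [xlo, 0])

open MeasureTheory
open scoped ENNReal

/-- The set of prize values `y` at which stopping is weakly better than paying
`c` to open the box with prize distribution `F` and then stopping. -/
noncomputable def stopSet (u : List ℝ≥0 → ℝ) (F : Measure ℝ≥0) (c : ℝ)
    (x : List ℝ≥0) : Set ℝ≥0 :=
  {y : ℝ≥0 | -c + ∫ t, u (x ++ [y, t]) ∂F ≤ u (x ++ [y])}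

/-!
Submodularity together with the neutrality of zero prizes gives decreasing differences:
the gain from adding a prize `t` to the uncovered prizes shrinks once a further prize `xj`
has been uncovered. Hence every `y` at which stopping beats opening the box given `x`
still does so given `x, xj`, i.e. the stopping set only grows and its infimum can only drop.
-/

section

variable {u : List ℝ≥0 → ℝ}

lemma IsSymmU.apply_append_zero_cons (hsymm : IsSymmU u) (hzero : ∀ l, u (0 :: l) = u l)
    (l₁ l₂ : List ℝ≥0) : u (l₁ ++ 0 :: l₂) = u (l₁ ++ l₂) := by
  rw [hsymm _ _ List.perm_middle, hzero]

lemma IsSubmodU.apply_append_pair_add_le (hsub : IsSubmodU u) (hsymm : IsSymmU u)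
    (hzero : ∀ l, u (0 :: l) = u l) (l : List ℝ≥0) (a t : ℝ≥0) :
    u (l ++ [a, t]) + u l ≤ u (l ++ [a]) + u (l ++ [t]) := by
  have hz := hsymm.apply_append_zero_cons hzero
  have hzipMin : List.zipWith min (l ++ [a, 0]) (l ++ [0, t]) = l ++ [0, 0] := by
    simp [List.zipWith_append]
  have hzipMax : List.zipWith max (l ++ [a, 0]) (l ++ [0, t]) = l ++ [a, t] := by
    simp [List.zipWith_append]
  have h := hsub (l ++ [a, 0]) (l ++ [0, t]) (by simp)
  rw [hzipMin, hzipMax] at h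
  have hl : u (l ++ [0, 0]) = u l := by
    rw [hz l [0], hz l [], List.append_nil]
  have ha : u (l ++ [a, 0]) = u (l ++ [a]) := by
    simpa using hz (l ++ [a]) []
  have ht : u (l ++ [0, t]) = u (l ++ [t]) := hz l [t]
  linarith

lemma Assumption1.apply_append_sub_le (hA1 : Assumption1 u) (x : List ℝ≥0) (xj y t : ℝ≥0) :
    u (x ++ [xj] ++ [y, t]) - u (x ++ [xj] ++ [y]) ≤ u (x ++ [y, t]) - u (x ++ [y]) := by
  obtain ⟨-, hzero, -, -, hsymm, -, hsub⟩ := hA1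
  have h := hsub.apply_append_pair_add_le hsymm hzero (x ++ [y]) xj t
  have hperm₁ : (x ++ [y] ++ [xj, t]).Perm (x ++ [xj] ++ [y, t]) := by
    simpa using List.Perm.append_left x (List.Perm.swap xj y [t])
  have hperm₂ : (x ++ [y] ++ [xj]).Perm (x ++ [xj] ++ [y]) := by
    simpa using List.Perm.append_left x (List.Perm.swap xj y [])
  rw [hsymm _ _ hperm₁, hsymm _ _ hperm₂] at h
  simp only [List.append_assoc, List.cons_append, List.nil_append] at h ⊢
  linarith

lemma stopSet_subset_stopSet_append (hA1 : Assumption1 u)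
    (F : Measure ℝ≥0) [IsProbabilityMeasure F]
    (hInt : ∀ l : List ℝ≥0, Integrable (fun t => u (l ++ [t])) F)
    (c : ℝ) (x : List ℝ≥0) (xj : ℝ≥0) :
    stopSet u F c x ⊆ stopSet u F c (x ++ [xj]) := by
  intro y (hy : -c + ∫ t, u (x ++ [y, t]) ∂F ≤ u (x ++ [y]))
  show -c + ∫ t, u (x ++ [xj] ++ [y, t]) ∂F ≤ u (x ++ [xj] ++ [y])
  have hInt' : ∀ l : List ℝ≥0, Integrable (fun t => u (l ++ [y, t])) F := fun l => by
    simpa using hInt (l ++ [y])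
  have hmono : ∫ t, u (x ++ [xj] ++ [y, t]) ∂F ≤
      ∫ t, (u (x ++ [y, t]) + (u (x ++ [xj] ++ [y]) - u (x ++ [y]))) ∂F :=
    integral_mono (hInt' (x ++ [xj])) ((hInt' x).add (integrable_const _))
      fun t => by linarith [hA1.apply_append_sub_le x xj y t]
  rw [integral_add (hInt' x) (integrable_const _), integral_const, probReal_univ,
    one_smul] at hmono
  linarith

end

theorem stmt_15_general (u : List ℝ≥0 → ℝ) (hA1 : Assumption1 u)
    (F : Measure ℝ≥0) [IsProbabilityMeasure F]
    (hInt : ∀ l : List ℝ≥0, Integrable (fun t => u (l ++ [t])) F)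
    (c : ℝ) (x : List ℝ≥0) (xj : ℝ≥0) :
    (⨅ y ∈ stopSet u F c (x ++ [xj]), (y : ℝ≥0∞)) ≤
      ⨅ y ∈ stopSet u F c x, (y : ℝ≥0∞) :=
  biInf_mono fun _ hy => stopSet_subset_stopSet_append hA1 F hInt c x xj hy

/-- Lemma 3: under Assumption 1, the generalized reservation value
`x_k*(x) = min{y ≥ 0 : u(x,y) ≥ -c_k + ∫ u(x,y,t) dF_k(t)}` (with value `+∞`
when no such `y` exists) weakly decreases when an additional prize `x_j` has
been uncovered: `x_k*(x, x_j) ≤ x_k*(x)`. -/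
theorem stmt_15 (u : List ℝ≥0 → ℝ) (hA1 : Assumption1 u)
    (F : Measure ℝ≥0) [IsProbabilityMeasure F]
    (hInt : ∀ l : List ℝ≥0, Integrable (fun t => u (l ++ [t])) F)
    (c : ℝ) (hc : 0 ≤ c) (x : List ℝ≥0) (xj : ℝ≥0) :
    (⨅ y ∈ stopSet u F c (x ++ [xj]), (y : ℝ≥0∞)) ≤
      ⨅ y ∈ stopSet u F c x, (y : ℝ≥0∞) :=
  stmt_15_general u hA1 F hInt c x xj
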